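/- If χ ∈ L* satisfies (χ(x_1), χ(x_2), …, χ(x_{k−2}), χ(x_k)) ≠ (0, 0, …, 0), then the coadjoint stabilizer L_χ = {X ∈ L : χ([X, Y]) = 0 for all Y ∈ L} has dimension exactly k. -/

import Mathlib

universe u v w

open Module

/-- The coadjoint stabilizer `g_χ = {X ∈ g : χ([X,Y]) = 0 for all Y ∈ g}` of a linear
functional `χ` on a Lie algebra `g`, as a linear subspace of `g`. -/
def coadjointStabilizer (𝕜 : Type u) [Field 𝕜] (g : Type v) [LieRing g] [LieAlgebra 𝕜 g]
    (χ : Module.Dual 𝕜 g) : Submodule 𝕜 g where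
  carrier := {X | ∀ Y : g, χ ⁅X, Y⁆ = 0}
  add_mem' := by intro a b ha hb; intro Y; rw [add_lie, map_add, ha Y, hb Y, add_zero]
  zero_mem' := by intro Y; rw [zero_lie, map_zero]
  smul_mem' := by intro c a ha; intro Y; rw [smul_lie, map_smul, ha Y, smul_zero]

/-- `b` is a basis of the Lie algebra `L` of the paper: `Sum.inl i ↦ x_{i+1}`
(for `i : Fin k`), `Sum.inr 0 ↦ D_0`, `Sum.inr 1 ↦ D`, where `D_0` is central, the `x_i`
commute, `[D, x_i] = x_i` for `i = 1, …, k-2`, `[D, x_{k-1}] = x_k` and `[D, x_k] = 0`. -/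
def IsLBasis {𝕜 : Type u} [Field 𝕜] {L : Type v} [LieRing L] [LieAlgebra 𝕜 L]
    {k : ℕ} (b : Basis (Fin k ⊕ Fin 2) 𝕜 L) : Prop :=
  (∀ i j : Fin k, ⁅b (Sum.inl i), b (Sum.inl j)⁆ = 0) ∧
  (∀ v : Fin k ⊕ Fin 2, ⁅b (Sum.inr 0), b v⁆ = 0) ∧
  (∀ i : Fin k, (i : ℕ) < k - 2 → ⁅b (Sum.inr 1), b (Sum.inl i)⁆ = b (Sum.inl i)) ∧
  (∀ i j : Fin k, (i : ℕ) = k - 2 → (j : ℕ) = k - 1 →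
      ⁅b (Sum.inr 1), b (Sum.inl i)⁆ = b (Sum.inl j)) ∧
  (∀ i : Fin k, (i : ℕ) = k - 1 → ⁅b (Sum.inr 1), b (Sum.inl i)⁆ = 0)

/-! With `d` the `D`-coordinate, the bracket of `L` is `[X, Y] = d(X) [D, Y] - d(Y) [D, X]`, so
`χ([X, Y]) = d(X) φ(Y) - d(Y) φ(X)` for `φ = χ ∘ ad D`: the form `(X, Y) ↦ χ([X, Y])` is
`d ∧ φ`. If `χ(x_i) ≠ 0` with `i ≠ k - 1`, then `x_i = [D, x_j]` for some `j`, so `φ(x_j) ≠ 0`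
while `d(x_j) = 0`, `d(D) = 1`, `φ(D) = 0`. Hence `d` and `φ` are independent, and the radical
`L_χ = ker d ∩ ker φ` of `d ∧ φ` has codimension `2`. -/

section

variable {𝕜 : Type u} [Field 𝕜] {L : Type v} [LieRing L] [LieAlgebra 𝕜 L]

theorem finrank_ker_inf_ker_add_two [FiniteDimensional 𝕜 L] {d φ : Module.Dual 𝕜 L}
    {x D : L} (hdx : d x = 0) (hφx : φ x ≠ 0) (hdD : d D ≠ 0) (hφD : φ D = 0) :
    finrank 𝕜 ↥(LinearMap.ker d ⊓ LinearMap.ker φ) + 2 = finrank 𝕜 L := by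
  have hsurj : Function.Surjective (d.prod φ) := fun ⟨s, t⟩ =>
    ⟨(s / d D) • D + (t / φ x) • x, by simp [hdx, hφD, hdD, hφx]⟩
  rw [← LinearMap.ker_prod, ← (d.prod φ).finrank_range_add_finrank_ker,
    LinearMap.range_eq_top.mpr hsurj, finrank_top, finrank_prod, finrank_self, add_comm]

theorem coadjointStabilizer_eq_ker_inf_ker {χ d φ : Module.Dual 𝕜 L}
    (hχ : ∀ X Y, χ ⁅X, Y⁆ = d X * φ Y - d Y * φ X)
    {x D : L} (hdx : d x = 0) (hφx : φ x ≠ 0) (hdD : d D ≠ 0) :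
    coadjointStabilizer 𝕜 L χ = LinearMap.ker d ⊓ LinearMap.ker φ := by
  ext X
  refine ⟨fun hX => ?_, fun ⟨hdX, hφX⟩ Y => ?_⟩
  · have hdX : d X = 0 := by simpa [hχ, hdx, hφx] using hX x
    have hφX : φ X = 0 := by simpa [hχ, hdX, hdD] using hX D
    exact ⟨hdX, hφX⟩
  · simp_all

theorem lie_eq_coord_smul_sub {ι : Type*} (b : Basis (ι ⊕ Fin 2) 𝕜 L)
    (hx : ∀ i j, ⁅b (Sum.inl i), b (Sum.inl j)⁆ = 0) (hD₀ : ∀ v, ⁅b (Sum.inr 0), b v⁆ = 0)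
    (X Y : L) :
    ⁅X, Y⁆ = b.coord (Sum.inr 1) X • ⁅b (Sum.inr 1), Y⁆ -
      b.coord (Sum.inr 1) Y • ⁅b (Sum.inr 1), X⁆ := by
  let B : L →ₗ[𝕜] L →ₗ[𝕜] L :=
    LinearMap.mk₂ 𝕜 (fun X Y => ⁅X, Y⁆) add_lie smul_lie lie_add lie_smul
  let B' : L →ₗ[𝕜] L →ₗ[𝕜] L := LinearMap.mk₂ 𝕜
    (fun X Y => b.coord (Sum.inr 1) X • ⁅b (Sum.inr 1), Y⁆ -
      b.coord (Sum.inr 1) Y • ⁅b (Sum.inr 1), X⁆)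
    (by intros; simp only [map_add, lie_add, add_smul, smul_add]; abel)
    (by intros; simp only [map_smul, lie_smul, smul_eq_mul]; module)
    (by intros; simp only [map_add, lie_add, add_smul, smul_add]; abel)
    (by intros; simp only [map_smul, lie_smul, smul_eq_mul]; module)
  have hD₀' (v) : ⁅b v, b (Sum.inr 0)⁆ = 0 := by rw [← lie_skew, hD₀, neg_zero]
  suffices B = B' from LinearMap.congr_fun₂ this X Y
  refine LinearMap.ext_basis b b fun v w => ?_
  rcases v with i | v <;> rcases w with j | w <;> (try fin_cases v) <;> (try fin_cases w) <;>
    simp [B, B', Basis.coord_apply, Basis.repr_self, hx, hD₀, hD₀']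

theorem IsLBasis.exists_lie_eq {k : ℕ} {b : Basis (Fin k ⊕ Fin 2) 𝕜 L} (hb : IsLBasis b)
    {i : Fin k} (hi : (i : ℕ) ≠ k - 2) : ∃ j, ⁅b (Sum.inr 1), b (Sum.inl j)⁆ = b (Sum.inl i) := by
  by_cases hlt : (i : ℕ) < k - 2
  · exact ⟨i, hb.2.2.1 i hlt⟩
  · exact ⟨⟨k - 2, by omega⟩, hb.2.2.2.1 _ i rfl (by omega)⟩

end

theorem stmt6 (k : ℕ)
    (𝕜 : Type u) [Field 𝕜]
    (L : Type v) [LieRing L] [LieAlgebra 𝕜 L]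
    (b : Basis (Fin k ⊕ Fin 2) 𝕜 L) (hb : IsLBasis b)
    (χ : Module.Dual 𝕜 L)
    (hχ : ∃ i : Fin k, (i : ℕ) ≠ k - 2 ∧ χ (b (Sum.inl i)) ≠ 0) :
    Module.finrank 𝕜 (coadjointStabilizer 𝕜 L χ) = k := by
  obtain ⟨i, hi, hχi⟩ := hχ
  obtain ⟨j, hj⟩ := hb.exists_lie_eq hi
  set D := b (Sum.inr 1)
  set d := b.coord (Sum.inr 1)
  let φ : Module.Dual 𝕜 L := χ ∘ₗ LieAlgebra.ad 𝕜 L D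
  have hform (X Y : L) : χ ⁅X, Y⁆ = d X * φ Y - d Y * φ X := by
    simp [lie_eq_coord_smul_sub b hb.1 hb.2.1 X Y, φ, d, D]
  have hdx : d (b (Sum.inl j)) = 0 := by simp [d]
  have hφx : φ (b (Sum.inl j)) ≠ 0 := by simpa [φ, hj] using hχi
  have hdD : d D ≠ 0 := by simp [d, D]
  have : FiniteDimensional 𝕜 L := .of_basis b
  have hdim := finrank_ker_inf_ker_add_two hdx hφx hdD (by simp [φ])
  rw [finrank_eq_card_basis b, Fintype.card_sum, Fintype.card_fin, Fintype.card_fin] at hdim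
  rw [coadjointStabilizer_eq_ker_inf_ker hform hdx hφx hdD]
  omega
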